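/- Let Y be a G-invariant linear subspace of C(X) and let g ∈ C(X). If g does not lie in the closure of Y with respect to the supremum norm, then g does not lie in the closure of Y with respect to the L²(μ)-norm. -/

import Mathlib

/-!
Average along the action against a continuous probability kernel `K` on `G` concentrated near the
identity: `T f x = ∫ K α • f (α • x) dα`. Then `T g` is uniformly close to `g` by uniform
continuity of `α ↦ g ∘ (α • ·)`, and `T f` lies in the uniform closure of `Y` for `f ∈ Y`, being an
average of elements of `Y`. Finally `‖T f‖_∞ ≤ ‖K‖_∞ ‖f‖_{L¹(μ)}`: by transitivity and Fubini,
averaging `|f|` over the orbit of any point gives `∫ |f| dμ`. So an `f ∈ Y` that is `L²`-close to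
`g` yields `T f ∈ closure Y` uniformly close to `g`.
-/

open MeasureTheory Measure

lemma Continuous.integrable_of_compactSpace {Z E : Type*} [TopologicalSpace Z] [CompactSpace Z]
    [MeasurableSpace Z] [OpensMeasurableSpace Z] [NormedAddCommGroup E] {ν : Measure Z}
    [IsFiniteMeasureOnCompacts ν] {f : Z → E} (hf : Continuous f) : Integrable f ν :=
  hf.integrable_of_hasCompactSupport (.of_compactSpace f)

lemma MeasureTheory.Lp.integral_norm_le_norm {α E : Type*} [MeasurableSpace α]
    [NormedAddCommGroup E] {p : ENNReal} [Fact (1 ≤ p)] {μ : Measure α} [IsProbabilityMeasure μ]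
    (f : Lp E p μ) : ∫ x, ‖f x‖ ∂μ ≤ ‖f‖ := by
  rw [integral_norm_eq_lintegral_enorm (Lp.aestronglyMeasurable f),
    ← eLpNorm_one_eq_lintegral_enorm, Lp.norm_def]
  exact ENNReal.toReal_mono (Lp.eLpNorm_ne_top f)
    (eLpNorm_le_eLpNorm_of_exponent_le Fact.out (Lp.aestronglyMeasurable f))

lemma ContinuousMap.integral_norm_le_norm_toLp {α E : Type*} [TopologicalSpace α] [CompactSpace α]
    [MeasurableSpace α] [BorelSpace α] [NormedAddCommGroup E] [SecondCountableTopologyEither α E]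
    (𝕜 : Type*) [NormedRing 𝕜] [Module 𝕜 E] [IsBoundedSMul 𝕜 E]
    {p : ENNReal} [Fact (1 ≤ p)] (μ : Measure α) [IsProbabilityMeasure μ] (f : C(α, E)) :
    ∫ x, ‖f x‖ ∂μ ≤ ‖ContinuousMap.toLp p μ 𝕜 f‖ := by
  rw [← integral_congr_ae ((coeFn_toLp (𝕜 := 𝕜) (p := p) μ f).mono fun x hx => congrArg norm hx)]
  exact Lp.integral_norm_le_norm _

/-- Inverting the normalized Haar measure provides the right invariance that averaging over
orbits needs. -/
lemma exists_isProbabilityMeasure_isMulRightInvariant (G : Type*) [Group G] [TopologicalSpace G]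
    [IsTopologicalGroup G] [CompactSpace G] [MeasurableSpace G] [BorelSpace G] :
    ∃ ν : Measure G, IsProbabilityMeasure ν ∧ ν.IsMulRightInvariant ∧ ν.IsOpenPosMeasure := by
  have : Nonempty G := ⟨1⟩
  refine ⟨(haarMeasure ⊤).inv, ⟨?_⟩, inferInstance, inferInstance⟩
  rw [inv_apply, Set.inv_univ, ← TopologicalSpace.PositiveCompacts.coe_top, haarMeasure_self]

lemma exists_continuous_nonneg_integral_eq_one_support_subset {G : Type*} [TopologicalSpace G]
    [R1Space G] [LocallyCompactSpace G] [MeasurableSpace G] [OpensMeasurableSpace G]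
    (ν : Measure G) [IsFiniteMeasureOnCompacts ν] [ν.IsOpenPosMeasure] {V : Set G} {a : G}
    (hV : IsOpen V) (ha : a ∈ V) :
    ∃ K : C(G, ℝ), (∀ α, 0 ≤ K α) ∧ ∫ α, K α ∂ν = 1 ∧ Function.support K ⊆ V := by
  obtain ⟨k, hka, hk_comp, hkV, hk01⟩ :=
    exists_continuousMap_one_of_isCompact_subset_isOpen isCompact_singleton hV
      (Set.singleton_subset_iff.2 ha)
  have hk0 : ∀ α, 0 ≤ k α := fun α => (hk01 α).1
  have hka_ne : k a ≠ 0 := by simp [hka (Set.mem_singleton a)]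
  have hk_pos : 0 < ∫ α, k α ∂ν :=
    k.continuous.integral_pos_of_hasCompactSupport_nonneg_nonzero hk_comp hk0 hka_ne
  refine ⟨(∫ α, k α ∂ν)⁻¹ • k, fun α => mul_nonneg (inv_nonneg.2 hk_pos.le) (hk0 α), ?_, ?_⟩
  · simp only [ContinuousMap.coe_smul, Pi.smul_apply, smul_eq_mul, integral_const_mul]
    exact inv_mul_cancel₀ hk_pos.ne'
  · exact (Function.support_const_smul_subset _ _).trans ((subset_tsupport k).trans hkV)

lemma integral_comp_smul_real_of_complex {G X : Type*} [TopologicalSpace X] [MeasurableSpace X]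
    [SMul G X] (μ : Measure X)
    (hμ : ∀ (f : C(X, ℂ)) (α : G), ∫ x, f x ∂μ = ∫ x, f (α • x) ∂μ) (F : C(X, ℝ)) (α : G) :
    ∫ x, F (α • x) ∂μ = ∫ x, F x ∂μ := by
  have h := hμ (ContinuousMap.mk ((↑) : ℝ → ℂ) Complex.continuous_ofReal |>.comp F) α
  simp only [ContinuousMap.comp_apply, ContinuousMap.coe_mk] at h
  exact_mod_cast h.symm

section Translates

variable {G X E : Type*} [TopologicalSpace G] [TopologicalSpace X] [TopologicalSpace E]

def translates (G : Type*) [TopologicalSpace G] [SMul G X] [ContinuousSMul G X] (w : C(X, E)) :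
    C(G, C(X, E)) :=
  (w.comp ⟨fun p : G × X => p.1 • p.2, continuous_smul⟩).curry

@[simp]
lemma translates_apply [SMul G X] [ContinuousSMul G X] (w : C(X, E)) (α : G) (x : X) :
    translates G w α x = w (α • x) :=
  rfl

@[simp]
lemma translates_one [Monoid G] [MulAction G X] [ContinuousSMul G X] (w : C(X, E)) :
    translates G w 1 = w := by
  ext; simp

lemma translates_sub [SMul G X] [ContinuousSMul G X] [Sub E] [ContinuousSub E] (v w : C(X, E))
    (α : G) : translates G (v - w) α = translates G v α - translates G w α :=
  rfl

end Translates

section KernelAverage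

variable {G X E : Type*} [TopologicalSpace G] [CompactSpace G] [MeasurableSpace G]
  [OpensMeasurableSpace G] [TopologicalSpace X] [CompactSpace X] [SMul G X] [ContinuousSMul G X]
  [NormedAddCommGroup E] [NormedSpace ℝ E]
  (ν : Measure G) [IsFiniteMeasureOnCompacts ν] (K : C(G, ℝ))

/-- The integral is taken in `C(X, E)`, so that continuity of the average and its membership in
closed convex sets of functions come for free; see `kernelAverage_apply` for the pointwise form. -/
noncomputable def kernelAverage (w : C(X, E)) : C(X, E) :=
  ∫ α, K α • translates G w α ∂ν

lemma integrable_smul_translates (w : C(X, E)) :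
    Integrable (fun α => K α • translates G w α) ν :=
  (K.continuous.smul (translates G w).continuous).integrable_of_compactSpace

lemma kernelAverage_sub (v w : C(X, E)) :
    kernelAverage ν K (v - w) = kernelAverage ν K v - kernelAverage ν K w := by
  simp only [kernelAverage, translates_sub, smul_sub]
  exact integral_sub (integrable_smul_translates ν K v) (integrable_smul_translates ν K w)

variable [CompleteSpace E]

lemma kernelAverage_apply (w : C(X, E)) (x : X) :
    kernelAverage ν K w x = ∫ α, K α • w (α • x) ∂ν :=
  ContinuousMap.integral_apply (integrable_smul_translates ν K w) x

lemma dist_kernelAverage_self_le {w : C(X, E)} {δ : ℝ} (hK₀ : ∀ α, 0 ≤ K α)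
    (hK₁ : ∫ α, K α ∂ν = 1) (hw : ∀ α ∈ Function.support K, dist (translates G w α) w ≤ δ) :
    dist (kernelAverage ν K w) w ≤ δ := by
  have hsub : kernelAverage ν K w - w = ∫ α, K α • (translates G w α - w) ∂ν := by
    simp only [smul_sub]
    have hconst : Integrable (fun α => K α • w) ν :=
      (K.continuous.smul continuous_const).integrable_of_compactSpace
    rw [integral_sub (integrable_smul_translates ν K w) hconst, integral_smul_const, hK₁,
      one_smul, kernelAverage]
  have hbound : ∀ α, ‖K α • (translates G w α - w)‖ ≤ K α * δ := by
    intro α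
    rw [norm_smul, Real.norm_of_nonneg (hK₀ α), ← dist_eq_norm]
    by_cases hα : K α = 0
    · simp [hα]
    · exact mul_le_mul_of_nonneg_left (hw α hα) (hK₀ α)
  calc dist (kernelAverage ν K w) w = ‖∫ α, K α • (translates G w α - w) ∂ν‖ := by
        rw [dist_eq_norm, hsub]
    _ ≤ ∫ α, K α * δ ∂ν :=
        norm_integral_le_of_norm_le (K.continuous.mul continuous_const).integrable_of_compactSpace
          (ae_of_all _ hbound)
    _ = δ := by rw [integral_mul_const, hK₁, one_mul]

lemma kernelAverage_mem_closure [IsProbabilityMeasure ν] {Y : Submodule ℝ C(X, E)}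
    (hY : ∀ w ∈ Y, ∀ α : G, translates G w α ∈ Y) {w : C(X, E)} (hw : w ∈ Y) :
    kernelAverage ν K w ∈ closure (Y : Set C(X, E)) :=
  Y.convex.closure.integral_mem isClosed_closure
    (ae_of_all _ fun α => subset_closure (Y.smul_mem (K α) (hY w hw α)))
    (integrable_smul_translates ν K w)

end KernelAverage

section OrbitIntegral

variable {G X E : Type*} [Group G] [TopologicalSpace G] [ContinuousMul G] [CompactSpace G]
  [MeasurableSpace G] [BorelSpace G] [TopologicalSpace X] [CompactSpace X] [MeasurableSpace X]
  [OpensMeasurableSpace X] [MulAction G X] [ContinuousSMul G X] [MulAction.IsPretransitive G X]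
  [NormedAddCommGroup E] [NormedSpace ℝ E] [CompleteSpace E]
  (ν : Measure G) [IsProbabilityMeasure ν] [ν.IsMulRightInvariant]
  (μ : Measure X) [IsProbabilityMeasure μ]

/-- Fubini on `G × X`; by right invariance of `ν` the inner integral over `G` is constant along
the single orbit. -/
theorem integral_comp_smul_eq_integral {F : X → E} (hF : Continuous F)
    (hμ : ∀ α : G, ∫ x, F (α • x) ∂μ = ∫ x, F x ∂μ) (x : X) :
    ∫ α, F (α • x) ∂ν = ∫ y, F y ∂μ := by
  have horbit : ∀ y, ∫ α, F (α • y) ∂ν = ∫ α, F (α • x) ∂ν := by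
    intro y
    obtain ⟨β, rfl⟩ := MulAction.exists_smul_eq G x y
    simp_rw [smul_smul]
    exact integral_mul_right_eq_self (fun α => F (α • x)) β
  have hswap : ∫ α, ∫ y, F (α • y) ∂μ ∂ν = ∫ y, ∫ α, F (α • y) ∂ν ∂μ :=
    integral_integral_swap_of_hasCompactSupport (f := fun α y => F (α • y))
      (hF.comp continuous_smul) (.of_compactSpace _)
  simpa only [hμ, horbit, integral_const, probReal_univ, one_smul] using hswap.symm

lemma norm_kernelAverage_le (hμ : ∀ (F : C(X, ℝ)) (α : G), ∫ x, F (α • x) ∂μ = ∫ x, F x ∂μ)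
    (K : C(G, ℝ)) (w : C(X, E)) : ‖kernelAverage ν K w‖ ≤ ‖K‖ * ∫ x, ‖w x‖ ∂μ := by
  rw [ContinuousMap.norm_le _ (by positivity)]
  intro x
  have hbound : ∀ α, ‖K α • w (α • x)‖ ≤ ‖K‖ * ‖w (α • x)‖ := fun α => by
    rw [norm_smul]
    exact mul_le_mul_of_nonneg_right (K.norm_coe_le_norm α) (norm_nonneg _)
  calc ‖kernelAverage ν K w x‖ ≤ ∫ α, ‖K‖ * ‖w (α • x)‖ ∂ν := by
        rw [kernelAverage_apply]
        refine norm_integral_le_of_norm_le ?_ (ae_of_all _ hbound)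
        exact (continuous_const.mul (by fun_prop)).integrable_of_compactSpace
    _ = ‖K‖ * ∫ x, ‖w x‖ ∂μ := by
        rw [integral_const_mul, integral_comp_smul_eq_integral (F := fun y => ‖w y‖) ν μ
          (by fun_prop) (fun α => hμ ⟨fun y => ‖w y‖, by fun_prop⟩ α) x]

lemma dist_kernelAverage_le_dist_toLp [BorelSpace X] [SecondCountableTopologyEither X E]
    (𝕜 : Type*) [NormedRing 𝕜] [Module 𝕜 E] [IsBoundedSMul 𝕜 E] {p : ENNReal} [Fact (1 ≤ p)]
    (hμ : ∀ (F : C(X, ℝ)) (α : G), ∫ x, F (α • x) ∂μ = ∫ x, F x ∂μ) (K : C(G, ℝ))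
    (v w : C(X, E)) :
    dist (kernelAverage ν K v) (kernelAverage ν K w) ≤
      ‖K‖ * dist (ContinuousMap.toLp p μ 𝕜 v) (ContinuousMap.toLp p μ 𝕜 w) := by
  rw [dist_eq_norm, dist_eq_norm, ← kernelAverage_sub, ← map_sub]
  exact (norm_kernelAverage_le ν μ hμ K (v - w)).trans
    (mul_le_mul_of_nonneg_left (ContinuousMap.integral_norm_le_norm_toLp 𝕜 μ _) (norm_nonneg K))

end OrbitIntegral

theorem not_mem_L2_closure_of_not_mem_uniform_closure_general
    {X : Type*} [TopologicalSpace X] [CompactSpace X]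
    [MeasurableSpace X] [BorelSpace X]
    {G : Type*} [Group G] [TopologicalSpace G] [IsTopologicalGroup G] [CompactSpace G]
    [MulAction G X] [ContinuousSMul G X] [MulAction.IsPretransitive G X]
    (μ : Measure X) [IsProbabilityMeasure μ]
    (hinv : ∀ (f : C(X, ℂ)) (α : G), ∫ x, f x ∂μ = ∫ x, f (α • x) ∂μ)
    (Y : Submodule ℂ C(X, ℂ))
    (hYinv : ∀ f ∈ Y, ∀ α : G, f.comp ⟨fun x => α • x, continuous_const_smul α⟩ ∈ Y)
    (g : C(X, ℂ)) (hg : g ∉ closure (Y : Set C(X, ℂ))) :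
    ContinuousMap.toLp 2 μ ℂ g ∉
      closure ((ContinuousMap.toLp 2 μ ℂ) '' (Y : Set C(X, ℂ))) := by
  intro hmem
  obtain ⟨ε, hε, hball⟩ := Metric.isOpen_iff.1 isClosed_closure.isOpen_compl g hg
  borelize G
  obtain ⟨ν, _, _, _⟩ := exists_isProbabilityMeasure_isMulRightInvariant G
  obtain ⟨K, hK₀, hK₁, hKg⟩ := exists_continuous_nonneg_integral_eq_one_support_subset ν
    (Metric.isOpen_ball.preimage (translates G g).continuous)
    (show (1 : G) ∈ translates G g ⁻¹' Metric.ball g (ε / 2) by simp [hε])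
  obtain ⟨δ, hδ, hKδ⟩ := exists_pos_mul_lt (half_pos hε) ‖K‖
  obtain ⟨_, ⟨f, hfY, rfl⟩, hgf⟩ := Metric.mem_closure_iff.1 hmem δ hδ
  have hμ := integral_comp_smul_real_of_complex μ hinv
  refine hball ?_ (kernelAverage_mem_closure ν K (Y := Y.restrictScalars ℝ) hYinv hfY)
  calc dist (kernelAverage ν K f) g
      ≤ dist (kernelAverage ν K g) (kernelAverage ν K f) + dist (kernelAverage ν K g) g :=
        dist_triangle_left _ _ _
    _ ≤ ‖K‖ * δ + ε / 2 := by
        gcongr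
        · exact (dist_kernelAverage_le_dist_toLp ν μ ℂ hμ K g f).trans
            (mul_le_mul_of_nonneg_left hgf.le (norm_nonneg K))
        · exact dist_kernelAverage_self_le ν K hK₀ hK₁ fun α hα => (hKg hα).le
    _ < ε := by linarith

/-- Let `Y` be a `G`-invariant linear subspace of `C(X)` and `g ∈ C(X)`. If
`g` is not in the uniform closure of `Y`, then `g` is not in the `L²(μ)`-closure of `Y`. -/
theorem not_mem_L2_closure_of_not_mem_uniform_closure
    {X : Type*} [TopologicalSpace X] [CompactSpace X] [T2Space X]
    [MeasurableSpace X] [BorelSpace X]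
    {G : Type*} [Group G] [TopologicalSpace G] [IsTopologicalGroup G] [CompactSpace G]
    [MulAction G X] [ContinuousSMul G X] [MulAction.IsPretransitive G X]
    (μ : Measure X) [IsProbabilityMeasure μ] [μ.Regular]
    (hinv : ∀ (f : C(X, ℂ)) (α : G), ∫ x, f x ∂μ = ∫ x, f (α • x) ∂μ)
    (Y : Submodule ℂ C(X, ℂ))
    (hYinv : ∀ f ∈ Y, ∀ α : G, f.comp ⟨fun x => α • x, continuous_const_smul α⟩ ∈ Y)
    (g : C(X, ℂ)) (hg : g ∉ closure (Y : Set C(X, ℂ))) :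
    ContinuousMap.toLp 2 μ ℂ g ∉
      closure ((ContinuousMap.toLp 2 μ ℂ) '' (Y : Set C(X, ℂ))) :=
  not_mem_L2_closure_of_not_mem_uniform_closure_general μ hinv Y hYinv g hg
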